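/- arXiv:2203.16890 — 8 statements merged into one kernel-verified Lean document; each statement's English description precedes it below -/
import Mathlib

section
/- Uniqueness of truth (semantic form): Let n ≥ 2 and suppose valuations of formulas (arbitrary on atoms, each connective interpreted by some fixed truth function) are given. If indices j and k are both truths — i.e., for every valuation σ, every index i, every formula φ, and all finite sets Γ, Δ of located formulas, σ satisfies Γ : Δ, (N_i φ, j) iff σ satisfies Γ : Δ ∪ {(φ, m) | m ≠ i}, and the same condition holds with k in place of j — then j = k. -/
/-- Formulas: atoms and unary connectives `N i` for `i : Fin n`
    (the connective `N_{i+1}` of the paper, locating values in `Fin n`). -/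
inductive Formula (n : ℕ) : Type
  | atom : ℕ → Formula n
  | N : Fin n → Formula n → Formula n
  deriving DecidableEq

/-- Located formulas: a formula together with a truth value (location). -/
abbrev LForm (n : ℕ) := Formula n × Fin n

/-- `σ` satisfies the located sequent `Γ : Δ`. -/
def Satisfies {n : ℕ} (σ : Formula n → Fin n) (Γ Δ : Finset (LForm n)) : Prop :=
  (∀ p ∈ Γ, σ p.1 = p.2) → ∃ p ∈ Δ, σ p.1 = p.2

/-- `σ` obeys the truth table (5.27): `σ(N_i φ) = v₁` if `σ(φ) ≠ v_i`,
    and `σ(N_i φ) = v_n` if `σ(φ) = v_i`. -/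
def ObeysTT {n : ℕ} (hn : 2 ≤ n) (σ : Formula n → Fin n) : Prop :=
  ∀ (i : Fin n) (φ : Formula n),
    (σ φ ≠ i → σ (Formula.N i φ) = ⟨0, by omega⟩) ∧
    (σ φ = i → σ (Formula.N i φ) = ⟨n - 1, by omega⟩)

/-- The set of located formulas `{(φ, m) | m ≠ i}`. -/
def locAll {n : ℕ} (φ : Formula n) (i : Fin n) : Finset (LForm n) :=
  (Finset.univ.erase i).image (fun m => (φ, m))

/-- `σ` interprets each connective `N i` by the truth function `f i`. -/
def Compositional {n : ℕ} (f : Fin n → Fin n → Fin n) (σ : Formula n → Fin n) : Prop :=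
  ∀ (i : Fin n) (φ : Formula n), σ (Formula.N i φ) = f i (σ φ)

/-- `j` is a truth: condition `(N_t)` holds semantically for all valuations
    compositional w.r.t. `f`. -/
def IsTruth {n : ℕ} (f : Fin n → Fin n → Fin n) (j : Fin n) : Prop :=
  ∀ σ : Formula n → Fin n, Compositional f σ →
    ∀ (i : Fin n) (φ : Formula n) (Γ Δ : Finset (LForm n)),
      Satisfies σ Γ (insert (Formula.N i φ, j) Δ) ↔ Satisfies σ Γ (Δ ∪ locAll φ i)

def Formula.eval {n : ℕ} (f : Fin n → Fin n → Fin n) (v : ℕ → Fin n) : Formula n → Fin n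
  | Formula.atom a => v a
  | Formula.N i φ => f i (Formula.eval f v φ)

lemma compositional_eval {n : ℕ} (f : Fin n → Fin n → Fin n) (v : ℕ → Fin n) :
    Compositional f (Formula.eval f v) := fun _ _ => rfl

lemma mem_locAll {n : ℕ} {φ ψ : Formula n} {i m : Fin n} :
    (ψ, m) ∈ locAll φ i ↔ ψ = φ ∧ m ≠ i := by
  simp only [locAll, Finset.mem_image, Finset.mem_erase, Finset.mem_univ, and_true, Prod.mk.injEq]
  constructor
  · rintro ⟨m, hm, rfl, rfl⟩
    exact ⟨rfl, hm⟩
  · rintro ⟨rfl, hm⟩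
    exact ⟨m, hm, rfl, rfl⟩

lemma satisfies_empty_left {n : ℕ} {σ : Formula n → Fin n} {Δ : Finset (LForm n)} :
    Satisfies σ ∅ Δ ↔ ∃ p ∈ Δ, σ p.1 = p.2 := by
  simp [Satisfies]

lemma IsTruth.eq_iff_ne {n : ℕ} {f : Fin n → Fin n → Fin n} {j : Fin n} (hj : IsTruth f j)
    {σ : Formula n → Fin n} (hσ : Compositional f σ) (i : Fin n) (φ : Formula n) :
    σ (Formula.N i φ) = j ↔ σ φ ≠ i := by
  have h := hj σ hσ i φ ∅ ∅
  simp only [satisfies_empty_left, Finset.empty_union, Finset.mem_insert,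
    Finset.notMem_empty, or_false, exists_eq_left] at h
  rw [h]
  constructor
  · rintro ⟨⟨ψ, m⟩, hp, hψ⟩
    obtain ⟨rfl, hm⟩ := mem_locAll.mp hp
    exact hψ ▸ hm
  · intro hne
    exact ⟨(φ, σ φ), mem_locAll.mpr ⟨rfl, hne⟩, rfl⟩

lemma IsTruth.apply_eq_iff_ne {n : ℕ} {f : Fin n → Fin n → Fin n} {j : Fin n}
    (hj : IsTruth f j) (i x : Fin n) : f i x = j ↔ x ≠ i :=
  hj.eq_iff_ne (compositional_eval f fun _ => x) i (Formula.atom 0)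

/-- If `j ≠ k`, the value `f k j` would have to be both `j` and `k`. -/
theorem uniqueness_of_truth_general {n : ℕ} (f : Fin n → Fin n → Fin n)
    (j k : Fin n) (hj : IsTruth f j) (hk : IsTruth f k) : j = k := by
  by_contra hjk
  exact hjk (((hj.apply_eq_iff_ne k j).mpr hjk).symm.trans ((hk.apply_eq_iff_ne k j).mpr hjk))

/-- Uniqueness of truth (semantic form). -/
theorem uniqueness_of_truth {n : ℕ} (hn : 2 ≤ n) (f : Fin n → Fin n → Fin n)
    (j k : Fin n) (hj : IsTruth f j) (hk : IsTruth f k) : j = k :=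
  uniqueness_of_truth_general f j k hj hk
end

section
/- Soundness of the vacuous elimination rule (N_k E_j): for every n ≥ 3, every valuation σ, all indices k and j with j ≠ 1 and j ≠ n, every formula φ, and all finite sets Γ, Δ of located formulas: σ satisfies Γ : Δ, (N_k φ, j) if and only if σ satisfies Γ : Δ. -/
theorem Satisfies.insert_iff_of_ne {n : ℕ} {σ : Formula n → Fin n} {Γ Δ : Finset (LForm n)}
    {p : LForm n} (hp : σ p.1 ≠ p.2) :
    Satisfies σ Γ (insert p Δ) ↔ Satisfies σ Γ Δ := by
  simp only [Satisfies, Finset.exists_mem_insert, or_iff_right hp]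

theorem ObeysTT.eval_N_eq_first_or_last {n : ℕ} {hn : 2 ≤ n} {σ : Formula n → Fin n}
    (hσ : ObeysTT hn σ) (i : Fin n) (φ : Formula n) :
    σ (Formula.N i φ) = ⟨0, by omega⟩ ∨ σ (Formula.N i φ) = ⟨n - 1, by omega⟩ := by
  by_cases h : σ φ = i
  · exact .inr ((hσ i φ).2 h)
  · exact .inl ((hσ i φ).1 h)

/-- Soundness of the vacuous elimination rule `(N_k E_j)` for `j ≠ 1, n`. -/
theorem vacuous_elim_sound {n : ℕ} (hn : 3 ≤ n) (σ : Formula n → Fin n)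
    (hσ : ObeysTT (by omega) σ) (k j : Fin n)
    (hj1 : j ≠ ⟨0, by omega⟩) (hjn : j ≠ ⟨n - 1, by omega⟩)
    (φ : Formula n) (Γ Δ : Finset (LForm n)) :
    Satisfies σ Γ (insert (Formula.N k φ, j) Δ) ↔ Satisfies σ Γ Δ := by
  apply Satisfies.insert_iff_of_ne
  rcases hσ.eval_N_eq_first_or_last k φ with h | h <;> rw [h]
  · exact hj1.symm
  · exact hjn.symm
end

section
/- Soundness of the coordination rule (c_{i,j}): for every n ≥ 2, every valuation σ, all indices i ≠ j, every formula φ, and all finite sets Γ, Δ of located formulas: if σ satisfies Γ : Δ, (φ, i) and σ satisfies Γ : Δ, (φ, j), then σ satisfies Γ : Δ. -/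
theorem Satisfies.of_insert_of_insert {n : ℕ} {σ : Formula n → Fin n} {Γ Δ : Finset (LForm n)}
    {p q : LForm n} (hp : Satisfies σ Γ (insert p Δ)) (hpq : σ p.1 = p.2 → σ q.1 ≠ q.2)
    (hq : Satisfies σ Γ (insert q Δ)) : Satisfies σ Γ Δ := by
  intro hΓ
  rcases (Finset.exists_mem_insert _ _ _).1 (hp hΓ) with hpσ | hΔ
  · exact ((Finset.exists_mem_insert _ _ _).1 (hq hΓ)).resolve_left (hpq hpσ)
  · exact hΔ

theorem coordination_sound_general {n : ℕ} (σ : Formula n → Fin n)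
    (i j : Fin n) (hij : i ≠ j) (φ : Formula n) (Γ Δ : Finset (LForm n))
    (h1 : Satisfies σ Γ (insert (φ, i) Δ)) (h2 : Satisfies σ Γ (insert (φ, j) Δ)) :
    Satisfies σ Γ Δ :=
  h1.of_insert_of_insert (fun hi hj => hij (hi.symm.trans hj)) h2

/-- Soundness of the coordination rule `(c_{i,j})`. -/
theorem coordination_sound {n : ℕ} (hn : 2 ≤ n) (σ : Formula n → Fin n)
    (i j : Fin n) (hij : i ≠ j) (φ : Formula n) (Γ Δ : Finset (LForm n))
    (h1 : Satisfies σ Γ (insert (φ, i) Δ)) (h2 : Satisfies σ Γ (insert (φ, j) Δ)) :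
    Satisfies σ Γ Δ :=
  coordination_sound_general σ i j hij φ Γ Δ h1 h2
end

section
/- Soundness of the shifting rules: for every n ≥ 2, every valuation σ, every formula φ, all finite sets Γ, Δ of located formulas, and every index i: (1) σ satisfies Γ, (φ, i) : Δ if and only if σ satisfies Γ : Δ ∪ {(φ, m) | m ≠ i}; and (2) for every j ≠ i, if σ satisfies Γ : Δ, (φ, i) then σ satisfies Γ, (φ, j) : Δ. -/
theorem exists_mem_locAll_iff {n : ℕ} {σ : Formula n → Fin n} {φ : Formula n} {i : Fin n} :
    (∃ p ∈ locAll φ i, σ p.1 = p.2) ↔ σ φ ≠ i := by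
  simp [locAll]

namespace Satisfies

variable {n : ℕ} {σ : Formula n → Fin n} {Γ Δ : Finset (LForm n)}

theorem insert_left_iff {q : LForm n} :
    Satisfies σ (insert q Γ) Δ ↔ (σ q.1 = q.2 → Satisfies σ Γ Δ) := by
  simp only [Satisfies, Finset.forall_mem_insert]
  tauto

theorem insert_right_iff {q : LForm n} :
    Satisfies σ Γ (insert q Δ) ↔ (σ q.1 ≠ q.2 → Satisfies σ Γ Δ) := by
  simp only [Satisfies, Finset.exists_mem_insert]
  tauto

theorem union_locAll_iff {φ : Formula n} {i : Fin n} :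
    Satisfies σ Γ (Δ ∪ locAll φ i) ↔ (σ φ = i → Satisfies σ Γ Δ) := by
  simp only [Satisfies, Finset.mem_union, or_and_right, exists_or, exists_mem_locAll_iff]
  by_cases hφ : σ φ = i <;> simp [hφ]

end Satisfies

theorem shifting_sound_general {n : ℕ} (σ : Formula n → Fin n)
    (φ : Formula n) (Γ Δ : Finset (LForm n)) (i : Fin n) :
    (Satisfies σ (insert (φ, i) Γ) Δ ↔ Satisfies σ Γ (Δ ∪ locAll φ i)) ∧
    ∀ j : Fin n, j ≠ i →
      Satisfies σ Γ (insert (φ, i) Δ) → Satisfies σ (insert (φ, j) Γ) Δ := by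
  refine ⟨Satisfies.insert_left_iff.trans Satisfies.union_locAll_iff.symm, ?_⟩
  intro j hji h
  refine Satisfies.insert_left_iff.mpr fun hφj => ?_
  exact Satisfies.insert_right_iff.mp h (hφj.trans_ne hji)

/-- Soundness of the shifting rules. -/
theorem shifting_sound {n : ℕ} (hn : 2 ≤ n) (σ : Formula n → Fin n)
    (φ : Formula n) (Γ Δ : Finset (LForm n)) (i : Fin n) :
    (Satisfies σ (insert (φ, i) Γ) Δ ↔ Satisfies σ Γ (Δ ∪ locAll φ i)) ∧
    ∀ j : Fin n, j ≠ i →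
      Satisfies σ Γ (insert (φ, i) Δ) → Satisfies σ (insert (φ, j) Γ) Δ :=
  shifting_sound_general σ φ Γ Δ i
end

section
/- Soundness of the natural deduction system 𝒩ⁿ for the generalized negations: for every n ≥ 2, every located sequent derivable in 𝒩ⁿ is valid, i.e., satisfied by every valuation obeying the truth table (5.27) for the connectives N₁,…,N_n. -/
/-- The natural deduction proof system `𝒩ⁿ` over located sequents. -/
inductive Deriv {n : ℕ} (hn : 2 ≤ n) :
    Finset (LForm n) → Finset (LForm n) → Prop
  /-- initial located sequents -/
  | init (Γ Δ : Finset (LForm n)) (φ : Formula n) (i : Fin n) :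
      Deriv hn (insert (φ, i) Γ) (insert (φ, i) Δ)
  /-- shifting rule `(→s_i)` -/
  | shiftR {Γ Δ : Finset (LForm n)} {φ : Formula n} {i : Fin n} :
      Deriv hn (insert (φ, i) Γ) Δ → Deriv hn Γ (Δ ∪ locAll φ i)
  /-- shifting rule `(←s_{i,j})` -/
  | shiftL {Γ Δ : Finset (LForm n)} {φ : Formula n} {i j : Fin n} : j ≠ i →
      Deriv hn Γ (insert (φ, i) Δ) → Deriv hn (insert (φ, j) Γ) Δ
  /-- coordination rule `(c_{i,j})` -/
  | coord {Γ Δ : Finset (LForm n)} {φ : Formula n} {i j : Fin n} : i ≠ j →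
      Deriv hn Γ (insert (φ, i) Δ) → Deriv hn Γ (insert (φ, j) Δ) → Deriv hn Γ Δ
  /-- cut rule -/
  | cut {Γ Δ : Finset (LForm n)} {φ : Formula n} {i : Fin n} :
      Deriv hn Γ (insert (φ, i) Δ) → Deriv hn (insert (φ, i) Γ) Δ → Deriv hn Γ Δ
  /-- `(N_k I₁)` -/
  | NI1 {Γ Δ : Finset (LForm n)} {φ : Formula n} {k : Fin n} :
      Deriv hn Γ (Δ ∪ locAll φ k) →
      Deriv hn Γ (insert (Formula.N k φ, ⟨0, by omega⟩) Δ)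
  /-- `(N_k E₁)` -/
  | NE1 {Γ Δ : Finset (LForm n)} {φ : Formula n} {k : Fin n} :
      Deriv hn Γ (insert (Formula.N k φ, ⟨0, by omega⟩) Δ) →
      Deriv hn Γ (Δ ∪ locAll φ k)
  /-- `(N_k I_n)` -/
  | NIn {Γ Δ : Finset (LForm n)} {φ : Formula n} {k : Fin n} :
      Deriv hn Γ (insert (φ, k) Δ) →
      Deriv hn Γ (insert (Formula.N k φ, ⟨n - 1, by omega⟩) Δ)
  /-- `(N_k E_n)` -/
  | NEn {Γ Δ : Finset (LForm n)} {φ : Formula n} {k : Fin n} :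
      Deriv hn Γ (insert (Formula.N k φ, ⟨n - 1, by omega⟩) Δ) →
      Deriv hn Γ (insert (φ, k) Δ)
  /-- `(N_k E_j)` for `j ≠ 1, n` -/
  | NEj {Γ Δ : Finset (LForm n)} {φ : Formula n} {k j : Fin n} :
      j ≠ ⟨0, by omega⟩ → j ≠ ⟨n - 1, by omega⟩ →
      Deriv hn Γ (insert (Formula.N k φ, j) Δ) → Deriv hn Γ Δ

section Semantics

variable {n : ℕ} {σ : Formula n → Fin n} {Γ Δ : Finset (LForm n)} {φ : Formula n} {i j : Fin n}

lemma exists_mem_union_locAll_iff :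
    (∃ p ∈ Δ ∪ locAll φ i, σ p.1 = p.2) ↔ (∃ p ∈ Δ, σ p.1 = p.2) ∨ σ φ ≠ i := by
  simp [locAll, or_and_right, exists_or]

lemma Satisfies.init : Satisfies σ (insert (φ, i) Γ) (insert (φ, i) Δ) :=
  fun h => ⟨(φ, i), Finset.mem_insert_self _ _, h _ (Finset.mem_insert_self _ _)⟩

lemma Satisfies.shiftR (h : Satisfies σ (insert (φ, i) Γ) Δ) :
    Satisfies σ Γ (Δ ∪ locAll φ i) := by
  simp only [Satisfies, Finset.forall_mem_insert, exists_mem_union_locAll_iff] at *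
  intro hΓ
  by_cases hφ : σ φ = i
  exacts [Or.inl (h ⟨hφ, hΓ⟩), Or.inr hφ]

lemma Satisfies.shiftL (hji : j ≠ i) (h : Satisfies σ Γ (insert (φ, i) Δ)) :
    Satisfies σ (insert (φ, j) Γ) Δ := by
  simp only [Satisfies, Finset.forall_mem_insert, Finset.exists_mem_insert] at *
  rintro ⟨rfl, hΓ⟩
  exact (h hΓ).resolve_left hji

lemma Satisfies.coord (hij : i ≠ j) (hi : Satisfies σ Γ (insert (φ, i) Δ))
    (hj : Satisfies σ Γ (insert (φ, j) Δ)) : Satisfies σ Γ Δ := by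
  simp only [Satisfies, Finset.exists_mem_insert] at *
  intro hΓ
  rcases hi hΓ with hφ | hΔ
  · exact (hj hΓ).resolve_left fun hφ' => hij (hφ.symm.trans hφ')
  · exact hΔ

lemma Satisfies.cut (h₁ : Satisfies σ Γ (insert (φ, i) Δ)) (h₂ : Satisfies σ (insert (φ, i) Γ) Δ) :
    Satisfies σ Γ Δ := by
  simp only [Satisfies, Finset.forall_mem_insert, Finset.exists_mem_insert] at *
  tauto

end Semantics

lemma first_ne_last {n : ℕ} (hn : 2 ≤ n) : (⟨0, by omega⟩ : Fin n) ≠ ⟨n - 1, by omega⟩ := by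
  simp only [ne_eq, Fin.mk.injEq]
  omega

section TruthTable

variable {n : ℕ} {hn : 2 ≤ n} {σ : Formula n → Fin n} {Γ Δ : Finset (LForm n)} {φ : Formula n}
  {k : Fin n}

lemma ObeysTT.N_eq_last_iff (hσ : ObeysTT hn σ) :
    σ (Formula.N k φ) = ⟨n - 1, by omega⟩ ↔ σ φ = k := by
  refine ⟨fun h => ?_, (hσ k φ).2⟩
  by_contra hφ
  exact first_ne_last hn (((hσ k φ).1 hφ).symm.trans h)

lemma ObeysTT.N_eq_first_iff (hσ : ObeysTT hn σ) :
    σ (Formula.N k φ) = ⟨0, by omega⟩ ↔ σ φ ≠ k :=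
  ⟨fun h hφ => first_ne_last hn (h.symm.trans (hσ.N_eq_last_iff.2 hφ)), (hσ k φ).1⟩

lemma ObeysTT.N_eq_first_or_last (hσ : ObeysTT hn σ) :
    σ (Formula.N k φ) = ⟨0, by omega⟩ ∨ σ (Formula.N k φ) = ⟨n - 1, by omega⟩ := by
  rw [hσ.N_eq_first_iff, hσ.N_eq_last_iff]
  exact ne_or_eq _ _

lemma satisfies_insert_N_first_iff (hσ : ObeysTT hn σ) :
    Satisfies σ Γ (insert (Formula.N k φ, ⟨0, by omega⟩) Δ) ↔ Satisfies σ Γ (Δ ∪ locAll φ k) := by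
  simp only [Satisfies, Finset.exists_mem_insert, exists_mem_union_locAll_iff,
    hσ.N_eq_first_iff, or_comm]

lemma satisfies_insert_N_last_iff (hσ : ObeysTT hn σ) :
    Satisfies σ Γ (insert (Formula.N k φ, ⟨n - 1, by omega⟩) Δ) ↔
      Satisfies σ Γ (insert (φ, k) Δ) := by
  simp only [Satisfies, Finset.exists_mem_insert, hσ.N_eq_last_iff]

lemma Satisfies.of_insert_N_middle (hσ : ObeysTT hn σ) {j : Fin n}
    (hj₁ : j ≠ ⟨0, by omega⟩) (hjn : j ≠ ⟨n - 1, by omega⟩)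
    (h : Satisfies σ Γ (insert (Formula.N k φ, j) Δ)) : Satisfies σ Γ Δ := by
  simp only [Satisfies, Finset.exists_mem_insert] at h
  intro hΓ
  refine (h hΓ).resolve_left fun hN => ?_
  rcases hσ.N_eq_first_or_last (k := k) (φ := φ) with h' | h'
  exacts [hj₁ (hN ▸ h'), hjn (hN ▸ h')]

end TruthTable

/-- Soundness of `𝒩ⁿ`: every derivable located sequent is valid. -/
theorem soundness_of_N_system {n : ℕ} (hn : 2 ≤ n) (Γ Δ : Finset (LForm n))
    (hD : Deriv hn Γ Δ) :
    ∀ σ : Formula n → Fin n, ObeysTT hn σ → Satisfies σ Γ Δ := by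
  intro σ hσ
  induction hD with
  | init => exact .init
  | shiftR _ ih => exact ih.shiftR
  | shiftL hji _ ih => exact ih.shiftL hji
  | coord hij _ _ ih₁ ih₂ => exact ih₁.coord hij ih₂
  | cut _ _ ih₁ ih₂ => exact ih₁.cut ih₂
  | NI1 _ ih => exact (satisfies_insert_N_first_iff hσ).2 ih
  | NE1 _ ih => exact (satisfies_insert_N_first_iff hσ).1 ih
  | NIn _ ih => exact (satisfies_insert_N_last_iff hσ).2 ih
  | NEn _ ih => exact (satisfies_insert_N_last_iff hσ).1 ih
  | NEj hj₁ hjn _ ih => exact ih.of_insert_N_middle hσ hj₁ hjn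
end

section
/- Admissibility of weakening in 𝒩ⁿ: for every n ≥ 2, if a located sequent Γ : Δ is derivable in 𝒩ⁿ, then for all finite sets Γ′, Δ′ of located formulas the sequents Γ ∪ Γ′ : Δ and Γ : Δ ∪ Δ′ are also derivable in 𝒩ⁿ. -/
/- Every rule stays valid in larger contexts; where a rule's conclusion has a principal formula,
that formula already lies in the enlarged context, so the rule lands there by
`insert_eq_of_mem` / `union_eq_left`. -/
open Finset in
theorem Deriv.mono {n : ℕ} {hn : 2 ≤ n} {Γ Δ Γ₂ Δ₂ : Finset (LForm n)}
    (h : Deriv hn Γ Δ) (hΓ : Γ ⊆ Γ₂) (hΔ : Δ ⊆ Δ₂) : Deriv hn Γ₂ Δ₂ := by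
  induction h generalizing Γ₂ Δ₂ with
  | init =>
    rw [← insert_eq_of_mem (hΓ (mem_insert_self _ _)),
      ← insert_eq_of_mem (hΔ (mem_insert_self _ _))]
    exact .init _ _ _ _
  | shiftR _ ih =>
    obtain ⟨hΔ, hloc⟩ := union_subset_iff.mp hΔ
    rw [← union_eq_left.mpr hloc]
    exact .shiftR (ih (insert_subset_insert _ hΓ) hΔ)
  | shiftL hji _ ih =>
    obtain ⟨hφ, hΓ⟩ := insert_subset_iff.mp hΓ
    rw [← insert_eq_of_mem hφ]
    exact .shiftL hji (ih hΓ (insert_subset_insert _ hΔ))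
  | coord hij _ _ ih₁ ih₂ =>
    exact .coord hij (ih₁ hΓ (insert_subset_insert _ hΔ)) (ih₂ hΓ (insert_subset_insert _ hΔ))
  | cut _ _ ih₁ ih₂ =>
    exact .cut (ih₁ hΓ (insert_subset_insert _ hΔ)) (ih₂ (insert_subset_insert _ hΓ) hΔ)
  | NI1 _ ih =>
    obtain ⟨hN, hΔ⟩ := insert_subset_iff.mp hΔ
    rw [← insert_eq_of_mem hN]
    exact .NI1 (ih hΓ (union_subset_union_left hΔ))
  | NE1 _ ih =>
    obtain ⟨hΔ, hloc⟩ := union_subset_iff.mp hΔ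
    rw [← union_eq_left.mpr hloc]
    exact .NE1 (ih hΓ (insert_subset_insert _ hΔ))
  | NIn _ ih =>
    obtain ⟨hN, hΔ⟩ := insert_subset_iff.mp hΔ
    rw [← insert_eq_of_mem hN]
    exact .NIn (ih hΓ (insert_subset_insert _ hΔ))
  | NEn _ ih =>
    obtain ⟨hφ, hΔ⟩ := insert_subset_iff.mp hΔ
    rw [← insert_eq_of_mem hφ]
    exact .NEn (ih hΓ (insert_subset_insert _ hΔ))
  | NEj hj1 hjn _ ih =>
    exact .NEj hj1 hjn (ih hΓ (insert_subset_insert _ hΔ))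

/-- Admissibility of weakening in `𝒩ⁿ`. -/
theorem weakening_admissible {n : ℕ} (hn : 2 ≤ n) (Γ Δ : Finset (LForm n))
    (hD : Deriv hn Γ Δ) (Γ' Δ' : Finset (LForm n)) :
    Deriv hn (Γ ∪ Γ') Δ ∧ Deriv hn Γ (Δ ∪ Δ') :=
  ⟨hD.mono Finset.subset_union_left subset_rfl, hD.mono subset_rfl Finset.subset_union_left⟩
end

section
/- Syntactic uniqueness of truth: let n ≥ 2 and work in the structural fragment of 𝒩ⁿ (initial sequents, shifting, coordination, cut), with derivability-from-hypotheses defined in the usual way. Suppose j ≠ k and both j and k satisfy the interderivability condition (N_t): for every i ∈ {1,…,n}, every formula φ, and all finite sets Γ, Δ of located formulas, the sequents Γ : Δ, (N_i φ, j) and Γ : Δ ∪ {(φ, m) | m ≠ i} are each derivable from the other, and likewise with k in place of j. Then the empty located sequent ∅ : ∅ is derivable. -/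
/-- Derivability from hypotheses `H` in the structural fragment of `𝒩ⁿ`
    (initial sequents, shifting, coordination, cut). -/
inductive DerivH {n : ℕ} (H : Finset (LForm n) → Finset (LForm n) → Prop) :
    Finset (LForm n) → Finset (LForm n) → Prop
  /-- hypotheses -/
  | hyp {Γ Δ : Finset (LForm n)} : H Γ Δ → DerivH H Γ Δ
  /-- initial located sequents -/
  | init (Γ Δ : Finset (LForm n)) (φ : Formula n) (i : Fin n) :
      DerivH H (insert (φ, i) Γ) (insert (φ, i) Δ)
  /-- shifting rule `(→s_i)` -/
  | shiftR {Γ Δ : Finset (LForm n)} {φ : Formula n} {i : Fin n} :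
      DerivH H (insert (φ, i) Γ) Δ → DerivH H Γ (Δ ∪ locAll φ i)
  /-- shifting rule `(←s_{i,j})` -/
  | shiftL {Γ Δ : Finset (LForm n)} {φ : Formula n} {i j : Fin n} : j ≠ i →
      DerivH H Γ (insert (φ, i) Δ) → DerivH H (insert (φ, j) Γ) Δ
  /-- coordination rule `(c_{i,j})` -/
  | coord {Γ Δ : Finset (LForm n)} {φ : Formula n} {i j : Fin n} : i ≠ j →
      DerivH H Γ (insert (φ, i) Δ) → DerivH H Γ (insert (φ, j) Δ) → DerivH H Γ Δ
  /-- cut rule -/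
  | cut {Γ Δ : Finset (LForm n)} {φ : Formula n} {i : Fin n} :
      DerivH H Γ (insert (φ, i) Δ) → DerivH H (insert (φ, i) Γ) Δ → DerivH H Γ Δ

/-- `Γ : Δ` is derivable taking the single sequent `Γ₀ : Δ₀` as a hypothesis. -/
def DerivFrom {n : ℕ} (Γ₀ Δ₀ Γ Δ : Finset (LForm n)) : Prop :=
  DerivH (fun Γ' Δ' => Γ' = Γ₀ ∧ Δ' = Δ₀) Γ Δ

/-- Condition `(N_t)` for the index `j`: for all `i`, `φ`, `Γ`, `Δ` the sequents
    `Γ : Δ, (N_i φ, j)` and `Γ : Δ ∪ {(φ, m) | m ≠ i}` are interderivable. -/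
def NtCond {n : ℕ} (j : Fin n) : Prop :=
  ∀ (i : Fin n) (φ : Formula n) (Γ Δ : Finset (LForm n)),
    DerivFrom Γ (Δ ∪ locAll φ i) Γ (insert (Formula.N i φ, j) Δ) ∧
    DerivFrom Γ (insert (Formula.N i φ, j) Δ) Γ (Δ ∪ locAll φ i)


/-! Chaining the two halves of `(N_t)` for `j` and for `k` moves a formula `N_i φ` on the right
from location `j` to location `k`. Shifting then makes `(N_i φ, j)` explosive on the left, so
shifting right gives `∅ : {(ψ, m) | m ≠ j}`; `(N_t)` turns this into `∅ : (N_j ψ, j)`, relocation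
into `∅ : (N_j ψ, k)`, and coordination yields `∅ : ∅`. -/

theorem DerivH.of_derivFrom {n : ℕ} {H : Finset (LForm n) → Finset (LForm n) → Prop}
    {Γ₀ Δ₀ Γ Δ : Finset (LForm n)} (h₀ : DerivH H Γ₀ Δ₀) (h : DerivFrom Γ₀ Δ₀ Γ Δ) :
    DerivH H Γ Δ := by
  induction h with
  | hyp hH => obtain ⟨rfl, rfl⟩ := hH; exact h₀
  | init Γ Δ φ i => exact .init Γ Δ φ i
  | shiftR _ ih => exact .shiftR ih
  | shiftL hne _ ih => exact .shiftL hne ih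
  | coord hne _ _ ih₁ ih₂ => exact .coord hne ih₁ ih₂
  | cut _ _ ih₁ ih₂ => exact .cut ih₁ ih₂

section NtCond

variable {n : ℕ} {H : Finset (LForm n) → Finset (LForm n) → Prop} {j k : Fin n}

theorem DerivH.relocate_N (hj : NtCond j) (hk : NtCond k) {i : Fin n} {φ : Formula n}
    {Γ Δ : Finset (LForm n)} (h : DerivH H Γ (insert (Formula.N i φ, j) Δ)) :
    DerivH H Γ (insert (Formula.N i φ, k) Δ) :=
  (h.of_derivFrom (hj i φ Γ Δ).2).of_derivFrom (hk i φ Γ Δ).1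

theorem DerivH.insert_N_left (hjk : j ≠ k) (hj : NtCond j) (hk : NtCond k) (i : Fin n)
    (φ : Formula n) (Γ Δ : Finset (LForm n)) :
    DerivH H (insert (Formula.N i φ, j) Γ) Δ := by
  have hinit := DerivH.init (H := H) Γ Δ (Formula.N i φ) j
  simpa only [Finset.insert_idem] using DerivH.shiftL hjk (hinit.relocate_N hj hk)

end NtCond

theorem syntactic_uniqueness_of_truth_general {n : ℕ} (j k : Fin n)
    (hjk : j ≠ k) (hj : NtCond j) (hk : NtCond k) :
    DerivH (fun _ _ => False) (∅ : Finset (LForm n)) (∅ : Finset (LForm n)) := by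
  set ψ : Formula n := Formula.N j (Formula.atom 0)
  have hψ : DerivH (fun _ _ => False) ∅ (∅ ∪ locAll ψ j) :=
    DerivH.shiftR (DerivH.insert_N_left hjk hj hk j (Formula.atom 0) ∅ ∅)
  have hj' : DerivH (fun _ _ => False) ∅ (insert (Formula.N j ψ, j) ∅) :=
    hψ.of_derivFrom (hj j ψ ∅ ∅).1
  exact DerivH.coord hjk hj' (hj'.relocate_N hj hk)

/-- Syntactic uniqueness of truth: if two distinct indices both satisfy `(N_t)`,
    the empty located sequent is derivable. -/
theorem syntactic_uniqueness_of_truth {n : ℕ} (hn : 2 ≤ n) (j k : Fin n)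
    (hjk : j ≠ k) (hj : NtCond j) (hk : NtCond k) :
    DerivH (fun _ _ => False) (∅ : Finset (LForm n)) (∅ : Finset (LForm n)) :=
  syntactic_uniqueness_of_truth_general j k hjk hj hk
end

section
/- Syntactic uniqueness of falsity: let n ≥ 2 and work in the structural fragment of 𝒩ⁿ (initial sequents, shifting, coordination, cut), with derivability-from-hypotheses defined in the usual way. Suppose j ≠ k and both j and k satisfy the interderivability condition (N_f): for every i ∈ {1,…,n}, every formula φ, and all finite sets Γ, Δ of located formulas, the sequents Γ : Δ, (N_i φ, j) and Γ : Δ, (φ, i) are each derivable from the other, and likewise with k in place of j. Then the empty located sequent ∅ : ∅ is derivable. -/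
/-- Condition `(N_f)` for the index `j`: for all `i`, `φ`, `Γ`, `Δ` the sequents
    `Γ : Δ, (N_i φ, j)` and `Γ : Δ, (φ, i)` are interderivable. -/
def NfCond {n : ℕ} (j : Fin n) : Prop :=
  ∀ (i : Fin n) (φ : Formula n) (Γ Δ : Finset (LForm n)),
    DerivFrom Γ (insert (φ, i) Δ) Γ (insert (Formula.N i φ, j) Δ) ∧
    DerivFrom Γ (insert (Formula.N i φ, j) Δ) Γ (insert (φ, i) Δ)

/-! Once two distinct values `j ≠ k` satisfy `(N_f)`, any located formula `(ψ, m)` can be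
dropped from a derivable succedent: `(N_f)` turns it into both `(N_m ψ, j)` and
`(N_m ψ, k)`, and coordination on these removes it. Starting from the shifted initial
sequent `∅ : (φ, j), {(φ, m) | m ≠ j}` and dropping every formula yields `∅ : ∅`. -/

namespace DerivH

variable {n : ℕ} {H H' : Finset (LForm n) → Finset (LForm n) → Prop}
  {Γ Δ : Finset (LForm n)} {j k : Fin n}

theorem of_hyps_derivable (h : DerivH H Γ Δ)
    (hH : ∀ Γ' Δ', H Γ' Δ' → DerivH H' Γ' Δ') : DerivH H' Γ Δ := by
  induction h with
  | hyp hΓΔ => exact hH _ _ hΓΔ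
  | init Γ Δ φ i => exact init Γ Δ φ i
  | shiftR _ ih => exact shiftR ih
  | shiftL hji _ ih => exact shiftL hji ih
  | coord hij _ _ ih₁ ih₂ => exact coord hij ih₁ ih₂
  | cut _ _ ih₁ ih₂ => exact cut ih₁ ih₂

theorem _root_.DerivFrom.derivH_of_derivH {Γ₀ Δ₀ : Finset (LForm n)}
    (h : DerivFrom Γ₀ Δ₀ Γ Δ) (h₀ : DerivH H Γ₀ Δ₀) : DerivH H Γ Δ :=
  h.of_hyps_derivable fun _ _ ⟨hΓ, hΔ⟩ => hΓ ▸ hΔ ▸ h₀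

theorem of_insert_right (hjk : j ≠ k) (hj : NfCond j) (hk : NfCond k) {ψ : Formula n}
    {m : Fin n} (h : DerivH H Γ (insert (ψ, m) Δ)) : DerivH H Γ Δ :=
  coord hjk ((hj m ψ Γ Δ).1.derivH_of_derivH h) ((hk m ψ Γ Δ).1.derivH_of_derivH h)

theorem empty_right (hjk : j ≠ k) (hj : NfCond j) (hk : NfCond k) (h : DerivH H Γ Δ) :
    DerivH H Γ ∅ := by
  induction Δ using Finset.induction_on with
  | empty => exact h
  | insert _ _ _ ih => exact ih (of_insert_right hjk hj hk h)

end DerivH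

theorem syntactic_uniqueness_of_falsity_general {n : ℕ} (j k : Fin n)
    (hjk : j ≠ k) (hj : NfCond j) (hk : NfCond k) :
    DerivH (fun _ _ => False) (∅ : Finset (LForm n)) (∅ : Finset (LForm n)) := by
  have hinit : DerivH (fun _ _ => False) (insert (Formula.atom 0, j) ∅)
      (insert (Formula.atom 0, j) ∅) := .init ∅ ∅ _ _
  exact hinit.shiftR.empty_right hjk hj hk

/-- Syntactic uniqueness of falsity: if two distinct indices both satisfy `(N_f)`,
    the empty located sequent is derivable. -/
theorem syntactic_uniqueness_of_falsity {n : ℕ} (hn : 2 ≤ n) (j k : Fin n)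
    (hjk : j ≠ k) (hj : NfCond j) (hk : NfCond k) :
    DerivH (fun _ _ => False) (∅ : Finset (LForm n)) (∅ : Finset (LForm n)) :=
  syntactic_uniqueness_of_falsity_general j k hjk hj hk
end
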